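/- arXiv:1604.05197 — 5 statements merged into one kernel-verified Lean document; each statement's English description precedes it below -/
import Mathlib

section
/- Let K be a field with a non-archimedean absolute value, let f(x) = x^d + a_{d-1}x^{d-1} + ⋯ + a_0 and g(y) = y^e + b_{e-1}y^{e-1} + ⋯ + b_0 be monic polynomials over K with all coefficients a_i, b_j of absolute value at most 1, and suppose d > e ≥ 1. If x, y ∈ K satisfy g(y) = f(x) and |x| > 1, then |y^e/x^d − 1| ≤ |x|^{-1}. -/
open Polynomial Finset

private lemma aux_tail {K : Type*} [NormedField K] [IsUltrametricDist K]
    (p : Polynomial K) (n : ℕ) (hn : p.natDegree = n)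
    (hint : ∀ i, ‖p.coeff i‖ ≤ 1) (z : K) (hz : 1 ≤ ‖z‖) :
    ‖p.eval z - p.coeff n * z ^ n‖ ≤ ‖z‖ ^ (n - 1) := by
  have hev : p.eval z = ∑ i ∈ range (n + 1), p.coeff i * z ^ i := by
    rw [eval_eq_sum_range, hn]
  have : p.eval z - p.coeff n * z ^ n = ∑ i ∈ range n, p.coeff i * z ^ i := by
    rw [hev, Finset.sum_range_succ]; ring
  rw [this]
  apply IsUltrametricDist.norm_sum_le_of_forall_le_of_nonneg
  · positivity
  · intro i hi
    simp only [Finset.mem_range] at hi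
    calc ‖p.coeff i * z ^ i‖ = ‖p.coeff i‖ * ‖z‖ ^ i := by rw [norm_mul, norm_pow]
    _ ≤ 1 * ‖z‖ ^ i := by gcongr; exact hint i
    _ = ‖z‖ ^ i := one_mul _
    _ ≤ ‖z‖ ^ (n - 1) := pow_le_pow_right₀ hz (by omega)

private lemma aux_small {K : Type*} [NormedField K] [IsUltrametricDist K]
    (p : Polynomial K) (hint : ∀ i, ‖p.coeff i‖ ≤ 1) (z : K) (hz : ‖z‖ ≤ 1) :
    ‖p.eval z‖ ≤ 1 := by
  rw [eval_eq_sum_range]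
  apply IsUltrametricDist.norm_sum_le_of_forall_le_of_nonneg zero_le_one
  intro i _
  calc ‖p.coeff i * z ^ i‖ = ‖p.coeff i‖ * ‖z‖ ^ i := by rw [norm_mul, norm_pow]
  _ ≤ 1 * 1 ^ i := by
      have : ‖z‖ ^ i ≤ 1 ^ i := pow_le_pow_left₀ (norm_nonneg _) hz i
      have := hint i
      nlinarith [norm_nonneg (p.coeff i), pow_nonneg (norm_nonneg z) i]
  _ = 1 := by simp

private lemma aux_eval_norm {K : Type*} [NormedField K] [IsUltrametricDist K]
    (p : Polynomial K) (hp : p.Monic) (n : ℕ) (hn1 : 1 ≤ n) (hn : p.natDegree = n)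
    (hint : ∀ i, ‖p.coeff i‖ ≤ 1) (z : K) (hz : 1 < ‖z‖) :
    ‖p.eval z‖ = ‖z‖ ^ n := by
  have hc : p.coeff n = 1 := by rw [← hn]; exact hp.coeff_natDegree
  have ht := aux_tail p n hn hint z hz.le
  rw [hc, one_mul] at ht
  have hlt : ‖p.eval z - z ^ n‖ < ‖z ^ n‖ := by
    rw [norm_pow]
    exact ht.trans_lt (pow_lt_pow_right₀ hz (by omega))
  have : p.eval z = (p.eval z - z ^ n) + z ^ n := by ring
  rw [this, IsUltrametricDist.norm_add_eq_max_of_norm_ne_norm (hlt.ne),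
    max_eq_right hlt.le, norm_pow]

/-- If `f`, `g` are monic of degrees `d > e ≥ 1` with coefficients of absolute value at most
one, `g(y) = f(x)` and `|x| > 1`, then `|y^e/x^d - 1| ≤ |x|⁻¹`. -/
theorem stmt_2 (K : Type*) [NormedField K] [IsUltrametricDist K]
    (d e : ℕ) (he : 1 ≤ e) (hde : e < d)
    (f g : Polynomial K) (hf : f.Monic) (hg : g.Monic)
    (hfd : f.natDegree = d) (hge : g.natDegree = e)
    (hfint : ∀ i, ‖f.coeff i‖ ≤ 1) (hgint : ∀ i, ‖g.coeff i‖ ≤ 1)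
    (x y : K) (hxy : g.eval y = f.eval x) (hx : 1 < ‖x‖) :
    ‖y ^ e / x ^ d - 1‖ ≤ ‖x‖⁻¹ := by
  have hd1 : 1 ≤ d := le_of_lt (lt_of_le_of_lt he hde)
  have hfx : ‖f.eval x‖ = ‖x‖ ^ d := aux_eval_norm f hf d hd1 hfd hfint x hx
  -- |y| > 1
  have hy : 1 < ‖y‖ := by
    by_contra h
    push_neg at h
    have := aux_small g hgint y h
    rw [hxy, hfx] at this
    exact absurd this (not_le.mpr (one_lt_pow₀ hx (by omega)))
  have hgy : ‖g.eval y‖ = ‖y‖ ^ e := aux_eval_norm g hg e he hge hgint y hy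
  have hye : ‖y‖ ^ e = ‖x‖ ^ d := by rw [← hgy, hxy, hfx]
  -- bound on ‖y‖^(e-1)
  have hyb : ‖y‖ ^ (e - 1) ≤ ‖x‖ ^ (d - 1) := by
    have h1 : (‖y‖ ^ (e - 1)) ^ e = (‖x‖ ^ d) ^ (e - 1) := by
      rw [← pow_mul, mul_comm, pow_mul, hye, ← pow_mul, pow_mul]
    have h2 : (‖x‖ ^ d) ^ (e - 1) ≤ (‖x‖ ^ (d - 1)) ^ e := by
      rw [← pow_mul, ← pow_mul]
      exact pow_le_pow_right₀ hx.le (by nlinarith [Nat.sub_add_cancel he, Nat.sub_add_cancel hd1])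
    exact le_of_pow_le_pow_left₀ (by omega) (by positivity) (h1.trans_le h2)
  -- bound ‖y^e - x^d‖
  have hcf : f.coeff d = 1 := by rw [← hfd]; exact hf.coeff_natDegree
  have hcg : g.coeff e = 1 := by rw [← hge]; exact hg.coeff_natDegree
  have htf := aux_tail f d hfd hfint x hx.le
  have htg := aux_tail g e hge hgint y hy.le
  rw [hcf, one_mul] at htf
  rw [hcg, one_mul] at htg
  have hkey : ‖y ^ e - x ^ d‖ ≤ ‖x‖ ^ (d - 1) := by
    have : y ^ e - x ^ d = (f.eval x - x ^ d) - (g.eval y - y ^ e) := by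
      rw [← hxy]; ring
    rw [this]
    have h := IsUltrametricDist.norm_add_le_max (f.eval x - x ^ d) (-(g.eval y - y ^ e))
    rw [norm_neg] at h
    refine le_trans (by rw [sub_eq_add_neg]; exact h) (max_le htf (htg.trans hyb))
  have hxd : x ^ d ≠ 0 := pow_ne_zero _ (by rintro rfl; simp at hx; linarith)
  have : y ^ e / x ^ d - 1 = (y ^ e - x ^ d) / x ^ d := by field_simp
  rw [this, norm_div, norm_pow]
  rw [div_le_iff₀ (by positivity)]
  calc ‖y ^ e - x ^ d‖ ≤ ‖x‖ ^ (d - 1) := hkey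
  _ = ‖x‖⁻¹ * ‖x‖ ^ d := by
      rw [← zpow_natCast, ← zpow_natCast, ← zpow_neg_one, ← zpow_add₀ (by positivity : ‖x‖ ≠ 0)]
      congr 1; omega
end

section
/- Let K be a field with a non-archimedean absolute value, and let f, g be monic polynomials over K of degrees d and e respectively, with d > e ≥ 1, all of whose coefficients have absolute value at most 1. If x, y ∈ K satisfy g(y) = f(x), then max{|y|, 1}^e = max{|x|, 1}^d. -/
open Polynomial

lemma eval_norm_le_one {K : Type*} [NormedField K] [IsUltrametricDist K]
    (p : Polynomial K) (hp : ∀ i, ‖p.coeff i‖ ≤ 1) (x : K) (hx : ‖x‖ ≤ 1) :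
    ‖p.eval x‖ ≤ 1 := by
  rw [Polynomial.eval_eq_sum_range]
  apply IsUltrametricDist.norm_sum_le_of_forall_le_of_nonneg zero_le_one
  intro i _
  rw [norm_mul, norm_pow]
  calc ‖p.coeff i‖ * ‖x‖ ^ i ≤ 1 * 1 ^ i :=
        mul_le_mul (hp i) (pow_le_pow_left₀ (norm_nonneg x) hx i) (by positivity) zero_le_one
    _ = 1 := by simp

lemma eval_norm_eq {K : Type*} [NormedField K] [IsUltrametricDist K]
    (p : Polynomial K) (hp : p.Monic) (hc : ∀ i, ‖p.coeff i‖ ≤ 1)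
    (hd : 1 ≤ p.natDegree) (x : K) (hx : 1 < ‖x‖) :
    ‖p.eval x‖ = ‖x‖ ^ p.natDegree := by
  have hx1 : (1:ℝ) ≤ ‖x‖ := hx.le
  rw [Polynomial.eval_eq_sum_range, Finset.sum_range_succ]
  have hlead : ‖p.coeff p.natDegree * x ^ p.natDegree‖ = ‖x‖ ^ p.natDegree := by
    rw [hp.coeff_natDegree, one_mul, norm_pow]
  have htail : ‖∑ i ∈ Finset.range p.natDegree, p.coeff i * x ^ i‖ < ‖x‖ ^ p.natDegree := by
    apply lt_of_le_of_lt (b := ‖x‖ ^ (p.natDegree - 1))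
    · apply IsUltrametricDist.norm_sum_le_of_forall_le_of_nonneg (by positivity)
      intro i hi
      rw [Finset.mem_range] at hi
      rw [norm_mul, norm_pow]
      calc ‖p.coeff i‖ * ‖x‖ ^ i ≤ 1 * ‖x‖ ^ (p.natDegree - 1) :=
            mul_le_mul (hc i) (pow_le_pow_right₀ hx1 (by omega)) (by positivity) zero_le_one
        _ = ‖x‖ ^ (p.natDegree - 1) := one_mul _
    · exact pow_lt_pow_right₀ hx (by omega)
  rw [IsUltrametricDist.norm_add_eq_max_of_norm_ne_norm (by rw [hlead]; exact htail.ne),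
    hlead, max_eq_right (le_of_lt (hlead ▸ htail))]

/-- Good reduction: if `f`, `g` are monic of degrees `d > e ≥ 1` with coefficients of
absolute value at most one and `g(y) = f(x)`, then `max{|y|,1}^e = max{|x|,1}^d`. -/
theorem stmt_3 (K : Type*) [NormedField K] [IsUltrametricDist K]
    (d e : ℕ) (he : 1 ≤ e) (hde : e < d)
    (f g : Polynomial K) (hf : f.Monic) (hg : g.Monic)
    (hfd : f.natDegree = d) (hge : g.natDegree = e)
    (hfint : ∀ i, ‖f.coeff i‖ ≤ 1) (hgint : ∀ i, ‖g.coeff i‖ ≤ 1)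
    (x y : K) (hxy : g.eval y = f.eval x) :
    (max ‖y‖ 1) ^ e = (max ‖x‖ 1) ^ d := by
  rcases le_or_gt ‖x‖ 1 with hx | hx
  · rcases le_or_gt ‖y‖ 1 with hy | hy
    · rw [max_eq_right hx, max_eq_right hy, one_pow, one_pow]
    · exfalso
      have h1 : ‖g.eval y‖ = ‖y‖ ^ e := by
        have := eval_norm_eq g hg hgint (by omega) y hy
        rwa [hge] at this
      have h2 : ‖f.eval x‖ ≤ 1 := eval_norm_le_one f hfint x hx
      rw [← hxy, h1] at h2
      exact absurd h2 (not_le.mpr (one_lt_pow₀ hy (by omega)))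
  · have h1 : ‖f.eval x‖ = ‖x‖ ^ d := by
      have := eval_norm_eq f hf hfint (by omega) x hx
      rwa [hfd] at this
    rcases le_or_gt ‖y‖ 1 with hy | hy
    · exfalso
      have h2 : ‖g.eval y‖ ≤ 1 := eval_norm_le_one g hgint y hy
      rw [hxy, h1] at h2
      exact absurd h2 (not_le.mpr (one_lt_pow₀ hx (by omega)))
    · have h2 : ‖g.eval y‖ = ‖y‖ ^ e := by
        have := eval_norm_eq g hg hgint (by omega) y hy
        rwa [hge] at this
      rw [max_eq_left hx.le, max_eq_left hy.le, ← h1, ← h2, hxy]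
end

section
/- Let d > e ≥ 1 with gcd(e, d) = 1, and fix integers s, t with sd + et = 1. Define integers a_{i,j} and b_{i,j} for 0 ≤ j ≤ i by: a_{0,0} = 1, b_{0,0} = 0; for each I ≥ 1, b_{I,0} = 0, and recursively for 0 ≤ j < I, b_{I,j+1} = s(a_{I-1,j} + e·b_{I,j}) and a_{I,j} = t(a_{I-1,j} + e·b_{I,j}); finally a_{I,I} = b_{I,I}. Then for every n ≥ 1, a_{n,n} ≡ s^n (mod e); in particular gcd(a_{n,n}, e) = 1. -/
/-- With `sd + et = 1` and the recursively defined integers `a_{i,j}`, `b_{i,j}`, we have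
`a_{n,n} ≡ s^n (mod e)` for all `n ≥ 1`; in particular `gcd(a_{n,n}, e) = 1`. -/
theorem stmt_10 (d e : ℕ) (he : 1 ≤ e) (hde : e < d) (hcop : Nat.Coprime e d)
    (s t : ℤ) (hst : s * d + e * t = 1)
    (a b : ℕ → ℕ → ℤ)
    (ha00 : a 0 0 = 1) (hb00 : b 0 0 = 0)
    (hb0 : ∀ I, 1 ≤ I → b I 0 = 0)
    (hbrec : ∀ I, 1 ≤ I → ∀ j, j < I → b I (j + 1) = s * (a (I - 1) j + e * b I j))
    (harec : ∀ I, 1 ≤ I → ∀ j, j < I → a I j = t * (a (I - 1) j + e * b I j))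
    (hdiag : ∀ I, 1 ≤ I → a I I = b I I) :
    ∀ n, 1 ≤ n → a n n ≡ s ^ n [ZMOD e] ∧ Int.gcd (a n n) e = 1 := by
  have hmod : ∀ n, 1 ≤ n → a n n ≡ s ^ n [ZMOD e] := by
    intro n hn
    induction n with
    | zero => omega
    | succ m ih =>
      rcases Nat.eq_zero_or_pos m with hm | hm
      · subst hm
        have h1 : a 1 1 = s := by
          rw [hdiag 1 le_rfl, show (1 : ℕ) = 0 + 1 from rfl,
            hbrec 1 le_rfl 0 (by norm_num)]
          simp [ha00, hb0 1 le_rfl]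
        rw [h1, pow_one]
      · have ihm := ih hm
        have h1 : a (m + 1) (m + 1) = s * (a m m + e * b (m + 1) m) := by
          rw [hdiag (m + 1) (by omega), hbrec (m + 1) (by omega) m (by omega)]
          simp
        rw [h1, pow_succ, mul_comm (s ^ m) s]
        have h2 : s * (a m m + e * b (m + 1) m) ≡ s * (a m m + 0) [ZMOD e] := by
          apply Int.ModEq.mul_left
          apply Int.ModEq.add_left
          exact Int.modEq_zero_iff_dvd.mpr ⟨b (m+1) m, rfl⟩
        calc s * (a m m + e * b (m + 1) m) ≡ s * (a m m + 0) [ZMOD e] := h2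
          _ = s * a m m := by ring
          _ ≡ s * s ^ m [ZMOD e] := Int.ModEq.mul_left s ihm
  intro n hn
  refine ⟨hmod n hn, ?_⟩
  have hcop_se : IsCoprime s (e : ℤ) := ⟨d, t, by linarith [hst]⟩
  have hdvd : (e : ℤ) ∣ a n n - s ^ n := (hmod n hn).symm.dvd
  obtain ⟨k, hk⟩ := hdvd
  have ha_eq : a n n = s ^ n + (e : ℤ) * k := by linarith
  rw [ha_eq]
  exact Int.isCoprime_iff_gcd_eq_one.mp ((hcop_se.pow_left).add_mul_left_left k)
end

section
/- Let K be an algebraically closed field and let e, d ≥ 1 with gcd(e, d) = 1. Let G_{e,d} = {(x_0, x_1, x_2, …) ∈ (K*)^ℕ : x_{i+1}^e = x_i^d for all i ≥ 0} and G_{e,1} = {(w_0, w_1, w_2, …) ∈ (K*)^ℕ : w_{i+1}^e = w_i for all i ≥ 0}, both groups under coordinatewise multiplication. Then there is a group isomorphism G_{e,d} ≅ G_{e,1} that is the identity on the first coordinate (i.e., commutes with projection to the 0-th coordinate). -/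
/-- The group of sequences `(x_i)` in `Kˣ` with `x_{i+1}^e = x_i^d`, under coordinatewise
multiplication. -/
def Ged (K : Type*) [Field K] (e d : ℕ) : Subgroup (ℕ → Kˣ) where
  carrier := {x | ∀ i, (x (i + 1)) ^ e = (x i) ^ d}
  mul_mem' := by
    intro a b ha hb i
    simp only [Pi.mul_apply, mul_pow, ha i, hb i]
  one_mem' := by intro i; simp
  inv_mem' := by
    intro a ha i
    simp only [Pi.inv_apply, inv_pow, ha i]

/-- For `K` algebraically closed and `gcd(e,d) = 1`, there is a group isomorphism
`G_{e,d} ≅ G_{e,1}` commuting with projection to the 0-th coordinate. -/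
theorem stmt_11 (K : Type*) [Field K] [IsAlgClosed K]
    (e d : ℕ) (he : 1 ≤ e) (hd : 1 ≤ d) (hcop : Nat.Coprime e d) :
    ∃ φ : Ged K e d ≃* Ged K e 1, ∀ x : Ged K e d, (φ x).val 0 = x.val 0 := by
  classical
  have e0 : ((e : ℤ)) ≠ 0 := by exact_mod_cast Nat.one_le_iff_ne_zero.mp he
  set v : ℕ → ℤ := fun i => Int.gcdA ((e:ℤ)^i) ((d:ℤ)^i) with hv
  set u : ℕ → ℤ := fun i => Int.gcdB ((e:ℤ)^i) ((d:ℤ)^i) with hu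
  have hbez : ∀ i, (e:ℤ)^i * v i + (d:ℤ)^i * u i = 1 := by
    intro i
    have h1 : Int.gcd ((e:ℤ)^i) ((d:ℤ)^i) = 1 := by
      rw [show ((e:ℤ))^i = ((e^i : ℕ) : ℤ) by push_cast; ring,
        show ((d:ℤ))^i = ((d^i : ℕ) : ℤ) by push_cast; ring,
        Int.gcd_natCast_natCast]
      exact Nat.Coprime.pow i i hcop
    have h2 := Int.gcd_eq_gcd_ab ((e:ℤ)^i) ((d:ℤ)^i)
    rw [h1] at h2
    simpa [hv, hu] using h2.symm
  -- key power relation in G_{e,d'}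
  have key : ∀ (d' : ℕ) (x : ℕ → Kˣ), (∀ i, x (i+1) ^ e = x i ^ d') → ∀ i,
      x i ^ ((e:ℤ)^i) = x 0 ^ ((d':ℤ)^i) := by
    intro d' x hx i
    induction i with
    | zero => simp
    | succ i ih =>
      have h2 : x (i+1) ^ (e:ℤ) = x i ^ ((d':ℤ)) := by
        rw [zpow_natCast, zpow_natCast]; exact hx i
      calc x (i+1) ^ ((e:ℤ)^(i+1))
          = (x (i+1) ^ (e:ℤ)) ^ ((e:ℤ)^i) := by rw [← zpow_mul, ← pow_succ']
        _ = (x i ^ ((e:ℤ)^i)) ^ ((d':ℤ)) := by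
            rw [h2, ← zpow_mul, mul_comm, zpow_mul]
        _ = x 0 ^ ((d':ℤ)^(i+1)) := by rw [ih, ← zpow_mul, ← pow_succ]
  -- forward map definition
  set f : (ℕ → Kˣ) → (ℕ → Kˣ) := fun x i => (x i) ^ (u i) * (x 0) ^ (v i) with hf
  set g : (ℕ → Kˣ) → (ℕ → Kˣ) := fun w i => (w i) ^ ((d:ℤ)^i) with hg
  have memF : ∀ x : ℕ → Kˣ, (∀ i, x (i+1) ^ e = x i ^ d) → ∀ i,
      (f x (i+1)) ^ e = (f x i) ^ 1 := by
    intro x hx i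
    have hcop' : IsCoprime ((e:ℤ)^i) ((d:ℤ)^i) := ⟨v i, u i, by linarith [hbez i]⟩
    have hAB : ((d:ℤ) * u (i+1) - u i) * (d:ℤ)^i + ((e:ℤ) * v (i+1) - v i) * (e:ℤ)^i = 0 := by
      have h1 := hbez i
      have h2 := hbez (i+1)
      have h2' : (e:ℤ)^i * ((e:ℤ) * v (i+1)) + (d:ℤ)^i * ((d:ℤ) * u (i+1)) = 1 := by
        rw [show (e:ℤ)^i * ((e:ℤ) * v (i+1)) = (e:ℤ)^(i+1) * v (i+1) by ring,
          show (d:ℤ)^i * ((d:ℤ) * u (i+1)) = (d:ℤ)^(i+1) * u (i+1) by ring]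
        exact h2
      linarith
    obtain ⟨m, hm⟩ : ((e:ℤ)^i) ∣ ((d:ℤ) * u (i+1) - u i) := by
      refine hcop'.dvd_of_dvd_mul_right ⟨-((e:ℤ) * v (i+1) - v i), ?_⟩
      linarith
    have hB : (e:ℤ) * v (i+1) - v i = -((d:ℤ)^i * m) := by
      have hne : ((e:ℤ)^i) ≠ 0 := pow_ne_zero _ e0
      have hz : (((e:ℤ) * v (i+1) - v i) + (d:ℤ)^i * m) * (e:ℤ)^i = 0 := by
        rw [show (((e:ℤ) * v (i+1) - v i) + (d:ℤ)^i * m) * (e:ℤ)^i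
            = ((e:ℤ) * v (i+1) - v i) * (e:ℤ)^i + ((e:ℤ)^i * m) * (d:ℤ)^i by ring, ← hm]
        linarith
      rcases mul_eq_zero.mp hz with h | h
      · linarith
      · exact absurd h hne
    have hkey := key d x hx i
    have lhs : (f x (i+1)) ^ (e:ℤ) = x i ^ ((d:ℤ) * u (i+1)) * x 0 ^ ((e:ℤ) * v (i+1)) := by
      simp only [hf]
      rw [mul_zpow, ← zpow_mul, ← zpow_mul]
      have h2 : x (i+1) ^ (u (i+1) * (e:ℤ)) = x i ^ ((d:ℤ) * u (i+1)) := by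
        rw [mul_comm (u (i+1)), zpow_mul, zpow_mul]
        congr 1
        rw [zpow_natCast, zpow_natCast]; exact hx i
      rw [h2]; congr 1; rw [mul_comm]
    have main : x i ^ ((d:ℤ) * u (i+1)) * x 0 ^ ((e:ℤ) * v (i+1)) = f x i := by
      have hu' : (d:ℤ) * u (i+1) = u i + (e:ℤ)^i * m := by linarith
      have hv' : (e:ℤ) * v (i+1) = v i - (d:ℤ)^i * m := by linarith
      rw [hu', hv', zpow_add, zpow_sub, zpow_mul, zpow_mul, hkey, hf]
      simp only []
      rw [mul_assoc, mul_comm ((x 0 ^ ((d:ℤ)^i)) ^ m), mul_assoc,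
        inv_mul_cancel, mul_one]
    calc (f x (i+1)) ^ e = (f x (i+1)) ^ (e:ℤ) := by rw [zpow_natCast]
      _ = f x i := by rw [lhs, main]
      _ = (f x i) ^ 1 := by rw [pow_one]
  have memG : ∀ w : ℕ → Kˣ, (∀ i, w (i+1) ^ e = w i ^ 1) → ∀ i,
      (g w (i+1)) ^ e = (g w i) ^ d := by
    intro w hw i
    simp only [hg]
    calc (w (i+1) ^ ((d:ℤ)^(i+1))) ^ e
        = (w (i+1) ^ ((d:ℤ)^(i+1))) ^ (e:ℤ) := by rw [zpow_natCast]
      _ = (w (i+1) ^ (e:ℤ)) ^ ((d:ℤ)^(i+1)) := by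
          rw [← zpow_mul, ← zpow_mul, mul_comm]
      _ = (w i) ^ ((d:ℤ)^(i+1)) := by
          rw [zpow_natCast, hw i, pow_one]
      _ = ((w i) ^ ((d:ℤ)^i)) ^ (d:ℤ) := by rw [← zpow_mul, ← pow_succ]
      _ = ((w i) ^ ((d:ℤ)^i)) ^ d := by rw [zpow_natCast]
  -- the equivalence
  refine ⟨{ toFun := fun x => ⟨f x.val, memF x.val x.2⟩,
            invFun := fun w => ⟨g w.val, memG w.val w.2⟩,
            left_inv := ?_, right_inv := ?_, map_mul' := ?_ }, ?_⟩
  · intro x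
    refine Subtype.ext (funext fun i => ?_)
    show (f x.val i) ^ ((d:ℤ)^i) = x.val i
    have hkey := key d x.val x.2 i
    simp only [hf]
    rw [mul_zpow, ← zpow_mul, ← zpow_mul]
    have hu' : u i * (d:ℤ)^i = 1 - (e:ℤ)^i * v i := by linarith [hbez i]
    rw [hu', zpow_sub, zpow_one, zpow_mul, hkey, mul_comm (v i), zpow_mul,
      mul_assoc, inv_mul_cancel, mul_one]
  · intro w
    refine Subtype.ext (funext fun i => ?_)
    show (g w.val i) ^ (u i) * (g w.val 0) ^ (v i) = w.val i
    have hkey := key 1 w.val w.2 i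
    simp only [Nat.cast_one, one_pow, zpow_one] at hkey
    simp only [hg, pow_zero, zpow_one]
    rw [← hkey, ← zpow_mul, ← zpow_mul, ← zpow_add]
    calc w.val i ^ ((d:ℤ)^i * u i + (e:ℤ)^i * v i) = w.val i ^ (1:ℤ) := by
          congr 1; linarith [hbez i]
      _ = w.val i := zpow_one _
  · intro x y
    refine Subtype.ext (funext fun i => ?_)
    show (x.val i * y.val i) ^ (u i) * (x.val 0 * y.val 0) ^ (v i)
        = (x.val i ^ u i * x.val 0 ^ v i) * (y.val i ^ u i * y.val 0 ^ v i)
    rw [mul_zpow, mul_zpow, mul_mul_mul_comm]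
  · intro x
    show x.val 0 ^ (u 0) * x.val 0 ^ (v 0) = x.val 0
    rw [← zpow_add]
    have h1 : u 0 + v 0 = 1 := by have := hbez 0; simp at this; linarith
    rw [h1, zpow_one]
end

section
/- Let K be a field with a non-archimedean absolute value and let f, g be monic polynomials over K of degrees d > e ≥ 1 with all coefficients of absolute value ≤ 1. Suppose (x_0, x_1, x_2, …) is a sequence in K with g(x_{n+1}) = f(x_n) for all n and |x_0| > 1. Then |x_n| = |x_0|^{(d/e)^n} for all n ≥ 0; in particular |x_n| → ∞ as n → ∞. -/
/-!
For a monic `p` with coefficients in the closed unit ball and `|x| > 1`, the leading term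
strictly dominates every other term, so `|p(x)| = |x|^deg p`, while `|x| ≤ 1` forces
`|p(x)| ≤ 1`. Hence `|x_n| > 1` propagates along the sequence, and then
`|x_{n+1}|^e = |g(x_{n+1})| = |f(x_n)| = |x_n|^d`, i.e. `|x_{n+1}| = |x_n|^{d/e}`.
-/

open Polynomial Filter

lemma IsUltrametricDist.norm_sum_lt_of_forall_lt {M ι : Type*} [SeminormedAddCommGroup M]
    [IsUltrametricDist M] {s : Finset ι} {f : ι → M} {C : ℝ} (hC : 0 < C)
    (h : ∀ i ∈ s, ‖f i‖ < C) : ‖∑ i ∈ s, f i‖ < C := by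
  rcases s.eq_empty_or_nonempty with rfl | hs
  · simpa using hC
  · obtain ⟨i, hi, hle⟩ := exists_norm_finsetSum_le_of_nonempty hs f
    exact hle.trans_lt (h i hi)

namespace Polynomial

variable {K : Type*} [NormedField K] [IsUltrametricDist K]

lemma norm_eval_le_one_of_norm_coeff_le_one {p : K[X]} (hp : ∀ i, ‖p.coeff i‖ ≤ 1) {x : K}
    (hx : ‖x‖ ≤ 1) : ‖p.eval x‖ ≤ 1 := by
  rw [eval_eq_sum_range]
  refine IsUltrametricDist.norm_sum_le_of_forall_le_of_nonneg zero_le_one fun i _ => ?_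
  rw [norm_mul, norm_pow]
  exact mul_le_one₀ (hp i) (by positivity) (pow_le_one₀ (norm_nonneg x) hx)

lemma one_lt_norm_of_one_lt_norm_eval {p : K[X]} (hp : ∀ i, ‖p.coeff i‖ ≤ 1) {x : K}
    (h : 1 < ‖p.eval x‖) : 1 < ‖x‖ := by
  by_contra! hx
  exact h.not_ge (norm_eval_le_one_of_norm_coeff_le_one hp hx)

lemma Monic.norm_eval_eq_pow_natDegree {p : K[X]} (hp : p.Monic) (hc : ∀ i, ‖p.coeff i‖ ≤ 1)
    {x : K} (hx : 1 < ‖x‖) : ‖p.eval x‖ = ‖x‖ ^ p.natDegree := by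
  set n := p.natDegree
  have hlower : ‖∑ i ∈ Finset.range n, p.coeff i * x ^ i‖ < ‖x ^ n‖ := by
    have hxn : 0 < ‖x ^ n‖ := by
      rw [norm_pow]
      exact pow_pos (zero_lt_one.trans hx) n
    refine IsUltrametricDist.norm_sum_lt_of_forall_lt hxn fun i hi => ?_
    calc ‖p.coeff i * x ^ i‖ = ‖p.coeff i‖ * ‖x‖ ^ i := by rw [norm_mul, norm_pow]
      _ ≤ ‖x‖ ^ i := mul_le_of_le_one_left (by positivity) (hc i)
      _ < ‖x ^ n‖ := by
        rw [norm_pow]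
        exact pow_lt_pow_right₀ hx (Finset.mem_range.mp hi)
  rw [eval_eq_sum_range, Finset.sum_range_succ, hp.coeff_natDegree, one_mul,
    IsUltrametricDist.norm_add_eq_max_of_norm_ne_norm hlower.ne, max_eq_right hlower.le,
    norm_pow]

lemma norm_pow_natDegree_eq_of_eval_eq_eval {f g : K[X]} (hf : f.Monic) (hg : g.Monic)
    (hfc : ∀ i, ‖f.coeff i‖ ≤ 1) (hgc : ∀ i, ‖g.coeff i‖ ≤ 1)
    (hfd : f.natDegree ≠ 0)
    {x y : K} (hx : 1 < ‖x‖) (hxy : g.eval y = f.eval x) :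
    1 < ‖y‖ ∧ ‖y‖ ^ g.natDegree = ‖x‖ ^ f.natDegree := by
  have hfx : ‖f.eval x‖ = ‖x‖ ^ f.natDegree := hf.norm_eval_eq_pow_natDegree hfc hx
  have hy : 1 < ‖y‖ := one_lt_norm_of_one_lt_norm_eval hgc <| by
    rw [hxy, hfx]
    exact one_lt_pow₀ hx hfd
  exact ⟨hy, by rw [← hg.norm_eval_eq_pow_natDegree hgc hy, hxy, hfx]⟩

end Polynomial

lemma Real.eq_rpow_div_of_pow_eq_pow {a b : ℝ} (ha : 0 ≤ a) (hb : 0 ≤ b) {d e : ℕ}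
    (he : e ≠ 0)
    (h : b ^ e = a ^ d) : b = a ^ ((d : ℝ) / e) := by
  rw [← Real.pow_rpow_inv_natCast hb he, h, div_eq_mul_inv, Real.rpow_mul ha, Real.rpow_natCast]

lemma Real.eq_rpow_pow_of_forall_eq_rpow {y : ℕ → ℝ} {r : ℝ} (h0 : 0 ≤ y 0)
    (h : ∀ n, y (n + 1) = y n ^ r) (n : ℕ) : y n = y 0 ^ (r ^ n) := by
  induction n with
  | zero => simp
  | succ n ih => rw [h, ih, ← Real.rpow_mul h0, pow_succ]

/-- Good reduction: if `g(x_{n+1}) = f(x_n)` for all `n` with `|x_0| > 1`, then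
`|x_n| = |x_0|^{(d/e)^n}`, and `|x_n| → ∞`. -/
theorem stmt_14 (K : Type*) [NormedField K] [IsUltrametricDist K]
    (d e : ℕ) (he : 1 ≤ e) (hde : e < d)
    (f g : Polynomial K) (hf : f.Monic) (hg : g.Monic)
    (hfd : f.natDegree = d) (hge : g.natDegree = e)
    (hfint : ∀ i, ‖f.coeff i‖ ≤ 1) (hgint : ∀ i, ‖g.coeff i‖ ≤ 1)
    (x : ℕ → K) (hx : ∀ n, g.eval (x (n + 1)) = f.eval (x n)) (hx0 : 1 < ‖x 0‖) :
    (∀ n, ‖x n‖ = ‖x 0‖ ^ (((d : ℝ) / (e : ℝ)) ^ n)) ∧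
      Tendsto (fun n => ‖x n‖) atTop atTop := by
  subst hfd hge
  have step {n : ℕ} (hn : 1 < ‖x n‖) :
      1 < ‖x (n + 1)‖ ∧ ‖x (n + 1)‖ ^ g.natDegree = ‖x n‖ ^ f.natDegree :=
    norm_pow_natDegree_eq_of_eval_eq_eval hf hg hfint hgint (by omega) hn (hx n)
  have hgt : ∀ n, 1 < ‖x n‖ := Nat.rec hx0 fun n ih => (step ih).1
  have hrec (n : ℕ) : ‖x (n + 1)‖ = ‖x n‖ ^ ((f.natDegree : ℝ) / g.natDegree) :=
    Real.eq_rpow_div_of_pow_eq_pow (norm_nonneg _) (norm_nonneg _) (by omega) (step (hgt n)).2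
  have hnorm := Real.eq_rpow_pow_of_forall_eq_rpow (y := fun n => ‖x n‖) (norm_nonneg _) hrec
  have hratio : 1 < (f.natDegree : ℝ) / g.natDegree := by
    rw [one_lt_div (by positivity)]
    exact_mod_cast hde
  refine ⟨hnorm, ?_⟩
  exact ((tendsto_rpow_atTop_of_base_gt_one _ hx0).comp
    (tendsto_pow_atTop_atTop_of_one_lt hratio)).congr fun n => (hnorm n).symm
end
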